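/- arXiv:0902.2742 — 6 statements merged into one kernel-verified Lean document; each statement's English description precedes it below -/
import Mathlib

section
/- For all t in (0,1) and γ = (n-2)/n with n ≥ 3, the inequality (1 - t^(1-γ))/(1 - t) < 1 - γt holds. -/
open Real

theorem stmt_0 (n : ℕ) (hn : 3 ≤ n) (γ : ℝ) (hγ : γ = ((n : ℝ) - 2) / n)
    (t : ℝ) (ht : t ∈ Set.Ioo (0 : ℝ) 1) :
    (1 - t ^ (1 - γ)) / (1 - t) < 1 - γ * t := by
  obtain ⟨ht0, ht1⟩ := ht
  have hn3 : (3:ℝ) ≤ n := by exact_mod_cast hn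
  have hγ0 : 0 < γ := by rw [hγ]; apply div_pos <;> linarith
  have hγ1 : γ < 1 := by rw [hγ, div_lt_one (by linarith)]; linarith
  have hA : t ^ γ < 1 + γ * (t - 1) := by
    have h := rpow_one_add_lt_one_add_mul_self (show (-1:ℝ) ≤ t - 1 by linarith)
      (sub_ne_zero.mpr ht1.ne) hγ0 hγ1
    rwa [add_sub_cancel] at h
  have hpos : 0 < 1 + γ * (t - 1) := (rpow_pos_of_pos ht0 γ).trans hA
  have hX : 0 < t ^ (1 - γ) := rpow_pos_of_pos ht0 _
  have hmul : t ^ (1 - γ) * t ^ γ = t := by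
    rw [← rpow_add ht0]; norm_num
  have hB : t < t ^ (1 - γ) * (1 + γ * (t - 1)) := by
    calc t = t ^ (1 - γ) * t ^ γ := hmul.symm
    _ < _ := by exact mul_lt_mul_of_pos_left hA hX
  have hC : t * (1 + γ * (1 - t)) < t ^ (1 - γ) := by
    nlinarith [hB, hX, mul_nonneg hX.le (sq_nonneg (γ * (1 - t)))]
  rw [div_lt_iff₀ (by linarith : (0:ℝ) < 1 - t)]
  nlinarith [hC]
end

section
/- Let M_n be the solution of M_n'(w) = 1 - M_n(w)^{2/n}, M_n(0) = 0, and Q_n(w) = (e^{2w/n} - 1)/(e^{2w/n} - (n-2)/n), with n ≥ 3. Then M_n(w) ≤ Q_n(w) for all w ≥ 0. -/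
/-!
`Q_n` is the explicit solution of the Riccati equation `y' = (1 - y)(1 - (1 - 2/n) y)`, `y(0) = 0`.
Bernoulli's inequality gives `1 - q^{2/n} ≤ (1 - q)(1 - (1 - 2/n) q)` for `q ≥ 0`, so `Q_n` is a
supersolution of `y' = 1 - y^{2/n}`. As the right-hand side of this equation is decreasing in `y`,
the comparison principle puts the solution `M_n` below `Q_n`.
-/

open Real Set Filter Topology

theorem one_sub_rpow_le_mul_one_sub {a q : ℝ} (ha₀ : 0 ≤ a) (ha₁ : a ≤ 1) (hq : 0 ≤ q) :
    1 - q ^ a ≤ (1 - q) * (1 - (1 - a) * q) := by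
  rcases hq.eq_or_lt with rfl | hq
  · simpa using rpow_nonneg le_rfl a
  have hbern : q ^ (1 - a) ≤ 1 + (1 - a) * (q - 1) := by
    simpa using rpow_one_add_le_one_add_mul_self (s := q - 1) (by linarith) (p := 1 - a)
      (by linarith) (by linarith)
  have hsplit : q ^ a * q ^ (1 - a) = q := by
    rw [← rpow_add hq, add_sub_cancel, rpow_one]
  have hpow := rpow_nonneg hq.le a
  nlinarith [mul_le_mul_of_nonneg_left hbern hpow,
    mul_nonneg hpow (sq_nonneg ((1 - a) * (1 - q)))]

/-- A strict-inequality fencing argument, perturbed by `ε (x - a)` and then `ε → 0`. -/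
theorem le_of_hasDerivAt_of_supersolution {F f g g' : ℝ → ℝ} {a b : ℝ}
    (hF : AntitoneOn F (Ici 0))
    (hf : ∀ x ∈ Icc a b, HasDerivAt f (F (f x)) x)
    (hg : ∀ x ∈ Icc a b, HasDerivAt g (g' x) x)
    (hsuper : ∀ x ∈ Icc a b, F (g x) ≤ g' x)
    (hg₀ : ∀ x ∈ Icc a b, 0 ≤ g x) (ha : f a ≤ g a) :
    ∀ x ∈ Icc a b, f x ≤ g x := by
  have hB (ε x : ℝ) (hx : x ∈ Icc a b) :
      HasDerivAt (fun y ↦ g y + ε * (y - a)) (g' x + ε) x :=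
    ((hg x hx).add (((hasDerivAt_id x).sub_const a).const_mul ε)).congr_deriv (by ring)
  have hstrict (ε : ℝ) (hε : 0 < ε) : ∀ x ∈ Icc a b, f x ≤ g x + ε * (x - a) := by
    refine image_le_of_deriv_right_lt_deriv_boundary'
      (fun x hx ↦ (hf x hx).continuousAt.continuousWithinAt)
      (fun x hx ↦ (hf x (Ico_subset_Icc_self hx)).hasDerivWithinAt) (by simpa using ha)
      (fun x hx ↦ (hB ε x hx).continuousAt.continuousWithinAt)
      (fun x hx ↦ (hB ε x (Ico_subset_Icc_self hx)).hasDerivWithinAt) ?_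
    intro x hx hfx
    have hx' := Ico_subset_Icc_self hx
    have hgf : g x ≤ f x := by nlinarith [hx.1]
    calc F (f x) ≤ F (g x) := hF (hg₀ x hx') ((hg₀ x hx').trans hgf) hgf
      _ ≤ g' x := hsuper x hx'
      _ < g' x + ε := by linarith
  intro x hx
  have hlim : Tendsto (fun ε ↦ g x + ε * (x - a)) (𝓝[>] 0) (𝓝 (g x)) := by
    refine tendsto_nhdsWithin_of_tendsto_nhds ?_
    simpa using ((continuous_id.mul continuous_const).const_add (g x)).tendsto (0 : ℝ)
  exact ge_of_tendsto hlim (eventually_nhdsWithin_of_forall fun ε hε ↦ hstrict ε hε x hx)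

noncomputable def riccatiSolution (a w : ℝ) : ℝ :=
  (exp (a * w) - 1) / (exp (a * w) - (1 - a))

theorem riccatiSolution_zero (a : ℝ) : riccatiSolution a 0 = 0 := by
  simp [riccatiSolution]

theorem riccatiSolution_denom_pos {a w : ℝ} (ha : 0 < a) (hw : 0 ≤ w) :
    0 < exp (a * w) - (1 - a) := by
  linarith [one_le_exp (mul_nonneg ha.le hw)]

theorem riccatiSolution_nonneg {a w : ℝ} (ha : 0 < a) (hw : 0 ≤ w) :
    0 ≤ riccatiSolution a w :=
  div_nonneg (by linarith [one_le_exp (mul_nonneg ha.le hw)])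
    (riccatiSolution_denom_pos ha hw).le

theorem hasDerivAt_riccatiSolution {a w : ℝ} (ha : 0 < a) (hw : 0 ≤ w) :
    HasDerivAt (riccatiSolution a)
      ((1 - riccatiSolution a w) * (1 - (1 - a) * riccatiSolution a w)) w := by
  have hexp : HasDerivAt (fun w ↦ exp (a * w)) (exp (a * w) * a) w := by
    simpa using ((hasDerivAt_id w).const_mul a).exp
  have hden := (riccatiSolution_denom_pos ha hw).ne'
  refine ((hexp.sub_const 1).div (hexp.sub_const (1 - a)) hden).congr_deriv ?_
  unfold riccatiSolution
  field_simp
  ring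

theorem stmt_8_general (n : ℕ) (hn : 3 ≤ n) (M Q : ℝ → ℝ)
    (hM0 : M 0 = 0)
    (hM : ∀ w ≥ (0 : ℝ), HasDerivAt M (1 - M w ^ ((2 : ℝ) / n)) w)
    (hQ : ∀ w : ℝ, Q w =
      (Real.exp (2 * w / n) - 1) / (Real.exp (2 * w / n) - ((n : ℝ) - 2) / n)) :
    ∀ w ≥ (0 : ℝ), M w ≤ Q w := by
  have hn' : (3 : ℝ) ≤ n := by exact_mod_cast hn
  have ha₀ : (0 : ℝ) < 2 / n := by positivity
  have ha₁ : (2 : ℝ) / n ≤ 1 := by rw [div_le_one (by positivity)]; linarith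
  obtain rfl : Q = riccatiSolution (2 / n) := by
    funext w
    rw [hQ, riccatiSolution, div_mul_eq_mul_div, one_sub_div (by positivity)]
  intro w hw
  refine le_of_hasDerivAt_of_supersolution (F := fun y ↦ 1 - y ^ ((2 : ℝ) / n))
    ?_ (fun x hx ↦ hM x hx.1) (fun x hx ↦ hasDerivAt_riccatiSolution ha₀ hx.1)
    (fun x hx ↦ one_sub_rpow_le_mul_one_sub ha₀.le ha₁ (riccatiSolution_nonneg ha₀ hx.1))
    (fun x hx ↦ riccatiSolution_nonneg ha₀ hx.1) (by rw [hM0, riccatiSolution_zero])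
    w ⟨hw, le_rfl⟩
  exact fun x hx y _ hxy ↦ sub_le_sub_left (rpow_le_rpow hx hxy ha₀.le) 1

theorem stmt_8 (n : ℕ) (hn : 3 ≤ n) (M Q : ℝ → ℝ)
    (hM0 : M 0 = 0) (hMnn : ∀ w ≥ (0 : ℝ), 0 ≤ M w)
    (hM : ∀ w ≥ (0 : ℝ), HasDerivAt M (1 - M w ^ ((2 : ℝ) / n)) w)
    (hQ : ∀ w : ℝ, Q w =
      (Real.exp (2 * w / n) - 1) / (Real.exp (2 * w / n) - ((n : ℝ) - 2) / n)) :
    ∀ w ≥ (0 : ℝ), M w ≤ Q w :=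
  stmt_8_general n hn M Q hM0 hM hQ
end

section
/- Define polynomials H_k by H_0(t) = -1 and H_{k+1}(t) = [(k+1-2α)t - (k+1-α)] H_k(t) + α t(1-t) H_k'(t) for k ≥ 0, where 0 < α ≤ 1. Then (-1)^{k+1} H_k(t) ≥ 0 for all t ∈ [0,1) and all k ≥ 0. -/
open Polynomial


lemma helper1 (i : ℕ) : X * derivative ((X : Polynomial ℝ) ^ i) = C (i : ℝ) * X ^ i := by
  cases i with
  | zero => simp
  | succ n =>
    rw [derivative_X_pow]
    push_cast
    ring_nf

lemma helper2 (j : ℕ) : (1 - X) * derivative ((1 - X : Polynomial ℝ) ^ j)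
    = -(C (j : ℝ) * (1 - X) ^ j) := by
  cases j with
  | zero => simp
  | succ n =>
    rw [derivative_pow]
    simp only [Nat.succ_sub_one]
    have : derivative (1 - X : Polynomial ℝ) = -1 := by simp
    rw [this]
    simp only [map_add, map_natCast, map_one]
    ring

lemma step4 (α : ℝ) (i j : ℕ) :
    (C ((i : ℝ) + (j : ℝ) + 1 - α) * (1 - X) + C α * X) * (X ^ i * (1 - X) ^ j)
      - C α * X * (1 - X) * derivative ((X : Polynomial ℝ) ^ i * (1 - X) ^ j)
    = C ((i : ℝ) + (j : ℝ) + 1 - α * ((i : ℝ) + 1)) * (X ^ i * (1 - X) ^ (j + 1))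
      + C (α * ((j : ℝ) + 1)) * (X ^ (i + 1) * (1 - X) ^ j) := by
  have h1 := helper1 i
  have h2 := helper2 j
  rw [derivative_mul]
  simp only [map_add, map_sub, map_mul, map_one, map_natCast] at *
  linear_combination (-(C α * (1 - X) ^ (j + 1))) * h1 + (-(C α * X ^ (i + 1))) * h2

lemma step5 (α : ℝ) (k i : ℕ) (hik : i ≤ k) :
    (C ((k : ℝ) + 1 - α) * (1 - X) + C α * X) * (X ^ i * (1 - X) ^ (k - i))
      - C α * X * (1 - X) * derivative ((X : Polynomial ℝ) ^ i * (1 - X) ^ (k - i))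
    = C ((k : ℝ) + 1 - α * ((i : ℝ) + 1)) * (X ^ i * (1 - X) ^ (k + 1 - i))
      + C (α * (((k - i : ℕ) : ℝ) + 1)) * (X ^ (i + 1) * (1 - X) ^ (k + 1 - (i + 1))) := by
  obtain ⟨j, rfl⟩ : ∃ j, k = i + j := ⟨k - i, (Nat.add_sub_cancel' hik).symm⟩
  have e1 : i + j - i = j := by omega
  have e2 : i + j + 1 - i = j + 1 := by omega
  have e3 : i + j + 1 - (i + 1) = j := by omega
  rw [e1, e2, e3]
  have := step4 α i j
  push_cast
  convert this using 3

lemma inv_lemma (α : ℝ) (hα : 0 < α) (hα1 : α ≤ 1) (H : ℕ → Polynomial ℝ)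
    (hH0 : H 0 = -1)
    (hHrec : ∀ k : ℕ, H (k + 1) =
      (C ((k : ℝ) + 1 - 2 * α) * X - C ((k : ℝ) + 1 - α)) * H k +
        C α * X * (1 - X) * derivative (H k)) :
    ∀ k : ℕ, ∃ c : ℕ → ℝ, (∀ i, 0 ≤ c i) ∧ (∀ i, k < i → c i = 0) ∧
      H k = C ((-1 : ℝ) ^ (k + 1)) *
        ∑ i ∈ Finset.range (k + 1), C (c i) * (X ^ i * (1 - X) ^ (k - i)) := by
  intro k
  induction k with
  | zero =>
    exact ⟨fun i => if i = 0 then 1 else 0, fun i => by positivity,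
      fun i hi => by simp [Nat.pos_iff_ne_zero.mp hi], by simp [hH0]⟩
  | succ k ih =>
    obtain ⟨c, hc0, hcz, hrep⟩ := ih
    set S : Polynomial ℝ := ∑ i ∈ Finset.range (k + 1), C (c i) * (X ^ i * (1 - X) ^ (k - i))
      with hS
    set a : ℕ → ℝ := fun i => (k : ℝ) + 1 - α * ((i : ℝ) + 1) with ha
    set b : ℕ → ℝ := fun i => α * (((k - i : ℕ) : ℝ) + 1) with hb
    refine ⟨fun i => c i * a i + (if i = 0 then 0 else c (i - 1) * b (i - 1)), ?_, ?_, ?_⟩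
    · intro i
      have h2 : 0 ≤ if i = 0 then 0 else c (i - 1) * b (i - 1) := by
        split
        · exact le_refl 0
        · exact mul_nonneg (hc0 _) (by simp only [hb]; positivity)
      rcases le_or_gt i k with h | h
      · have : 0 ≤ a i := by
          have : α * ((i : ℝ) + 1) ≤ 1 * ((i : ℝ) + 1) := by
            apply mul_le_mul_of_nonneg_right hα1; positivity
          simp only [ha]
          push_cast
          nlinarith [(Nat.cast_le (α := ℝ)).mpr h]
        have := mul_nonneg (hc0 i) this
        simp only []
        linarith
      · simp only []
        rw [hcz i h]
        simpa using h2
    · intro i hi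
      simp only []
      rw [hcz i (by omega)]
      have : ¬ i = 0 := by omega
      rw [if_neg this, hcz (i - 1) (by omega)]
      ring
    · have key : (∑ i ∈ Finset.range (k + 2),
          C (c i * a i + (if i = 0 then 0 else c (i - 1) * b (i - 1))) *
            (X ^ i * (1 - X) ^ (k + 1 - i)))
          = (C ((k : ℝ) + 1 - α) * (1 - X) + C α * X) * S
            - C α * X * (1 - X) * derivative S := by
        simp only [C_add, add_mul, Finset.sum_add_distrib]
        rw [Finset.sum_range_succ (fun i => C (c i * a i) * (X ^ i * (1 - X) ^ (k + 1 - i)))]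
        rw [hcz (k + 1) (by omega)]
        rw [Finset.sum_range_succ' (fun i =>
          C (if i = 0 then 0 else c (i - 1) * b (i - 1)) * (X ^ i * (1 - X) ^ (k + 1 - i)))]
        simp only [Nat.succ_ne_zero, if_false, if_pos rfl, Nat.add_sub_cancel, map_zero,
          zero_mul, add_zero, zero_mul, if_true]
        rw [← Finset.sum_add_distrib, hS, derivative_sum, Finset.mul_sum, Finset.mul_sum,
          Finset.mul_sum, ← Finset.sum_add_distrib, ← Finset.sum_sub_distrib]
        apply Finset.sum_congr rfl
        intro i hi
        have hik : i ≤ k := Nat.lt_succ_iff.mp (Finset.mem_range.mp hi)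
        rw [derivative_C_mul]
        have hstep := step5 α k i hik
        simp only [ha, hb, map_mul, map_add, map_sub, map_one, map_natCast] at hstep ⊢
        linear_combination (-(C (c i))) * hstep
      simp only []
      rw [hHrec k, hrep, key, derivative_C_mul]
      have hpow : ((-1 : ℝ)) ^ (k + 1 + 1) = -(-1 : ℝ) ^ (k + 1) := by ring
      rw [hpow, map_neg]
      simp only [map_sub, map_add, map_mul, map_one, map_ofNat]
      ring

theorem stmt_11 (α : ℝ) (hα : 0 < α) (hα1 : α ≤ 1) (H : ℕ → Polynomial ℝ)
    (hH0 : H 0 = -1)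
    (hHrec : ∀ k : ℕ, H (k + 1) =
      (C ((k : ℝ) + 1 - 2 * α) * X - C ((k : ℝ) + 1 - α)) * H k +
        C α * X * (1 - X) * derivative (H k)) :
    ∀ k : ℕ, ∀ t ∈ Set.Ico (0 : ℝ) 1, 0 ≤ (-1 : ℝ) ^ (k + 1) * (H k).eval t := by
  intro k t ht
  obtain ⟨ht0, ht1⟩ := ht
  obtain ⟨c, hc0, hcz, hrep⟩ := inv_lemma α hα hα1 H hH0 hHrec k
  rw [hrep]
  simp only [eval_mul, eval_C, eval_finset_sum, eval_pow, eval_sub, eval_one, eval_X]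
  rw [← mul_assoc]
  have h1 : (-1 : ℝ) ^ (k + 1) * (-1 : ℝ) ^ (k + 1) = 1 := by
    rw [← pow_add]
    exact (Even.neg_one_pow ⟨k + 1, by ring⟩)
  rw [h1, one_mul]
  apply Finset.sum_nonneg
  intro i _
  exact mul_nonneg (hc0 i) (mul_nonneg (pow_nonneg ht0 _) (pow_nonneg (by linarith) _))
end

section
/- Define polynomials H_k^*(z) by H_0^*(z) = -1 and -H_{k+1}^*(z) = [α + (k+1)(1-α)z] H_k^*(z) + α z(1+z) (H_k^*)'(z), with 0 ≤ α ≤ 1. Then all coefficients of (-1)^{k+1} H_k^*(z) are nonnegative. -/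
open Polynomial

theorem stmt_12 (α : ℝ) (hα : 0 ≤ α) (hα1 : α ≤ 1) (H : ℕ → Polynomial ℝ)
    (hH0 : H 0 = -1)
    (hHrec : ∀ k : ℕ, -H (k + 1) =
      (C α + C (((k : ℝ) + 1) * (1 - α)) * X) * H k +
        C α * X * (1 + X) * derivative (H k)) :
    ∀ k i : ℕ, 0 ≤ (-1 : ℝ) ^ (k + 1) * (H k).coeff i := by
  have key : ∀ p q : Polynomial ℝ, (∀ i, 0 ≤ p.coeff i) → (∀ i, 0 ≤ q.coeff i) →
      ∀ i, 0 ≤ (p * q).coeff i := by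
    intro p q hp hq i
    rw [coeff_mul]
    exact Finset.sum_nonneg fun x _ => mul_nonneg (hp _) (hq _)
  intro k
  induction k with
  | zero =>
    intro i
    rw [hH0]
    simp only [pow_one, coeff_neg, coeff_one]
    split <;> simp
  | succ k ih =>
    intro i
    set c : ℝ := ((k : ℝ) + 1) * (1 - α) with hc
    have hcnn : 0 ≤ c := mul_nonneg (by positivity) (by linarith)
    set p : Polynomial ℝ := C ((-1 : ℝ) ^ (k + 1)) * H k with hpdef
    have hpnn : ∀ i, 0 ≤ p.coeff i := by
      intro i; rw [hpdef, coeff_C_mul]; exact ih i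
    have hdp : ∀ i, 0 ≤ (derivative p).coeff i := by
      intro i
      rw [coeff_derivative]
      exact mul_nonneg (hpnn _) (by positivity)
    have hid : C ((-1 : ℝ) ^ (k + 2)) * H (k + 1) =
        (C α + C c * X) * p + C α * X * (1 + X) * derivative p := by
      have hd : derivative p = C ((-1 : ℝ) ^ (k + 1)) * derivative (H k) := by
        rw [hpdef, derivative_C_mul]
      have h1 : C ((-1 : ℝ) ^ (k + 2)) * H (k + 1)
          = C ((-1 : ℝ) ^ (k + 1)) * (-H (k + 1)) := by
        rw [pow_succ]
        simp [map_mul]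
      rw [h1, hHrec k, hd, hpdef]
      ring
    have hco : (-1 : ℝ) ^ (k + 1 + 1) * (H (k + 1)).coeff i
        = (C ((-1 : ℝ) ^ (k + 2)) * H (k + 1)).coeff i := by
      rw [coeff_C_mul]
    rw [hco, hid, coeff_add]
    have h1 : ∀ j, 0 ≤ (C α + C c * X).coeff j := by
      intro j
      match j with
      | 0 => simp [hα]
      | 1 => simpa using hcnn
      | (n + 2) => simp [coeff_C]
    have h2 : ∀ j, 0 ≤ (C α * X * (1 + X)).coeff j := by
      have := key (C α * X) (1 + X) ?_ ?_
      · exact this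
      · intro j
        match j with
        | 0 => simp
        | 1 => simpa using hα
        | (n + 2) => simp [coeff_C]
      · intro j
        match j with
        | 0 => simp
        | 1 => norm_num [coeff_one]
        | (n + 2) => simp [coeff_X, coeff_one]
    exact add_nonneg (key _ _ h1 hpnn i) (key _ _ h2 hdp i)
end

section
/- Let σ_k be defined by σ_1 = 1 and σ_k = (1/(k(k-1))) Σ_{ν=1}^{k-1} σ_ν σ_{k-ν} [(1+α)ν - αk] ν for k ≥ 2, where 0 < α < 1. Then σ_k > 0 for all k ≥ 1. -/
/-! Pairing the summands for `ν` and `k - ν` of the recursion, the two weights add up to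
`ν ((1+α)ν - αk) + (k-ν)((1+α)(k-ν) - αk) = (2ν - k)² + 2(1-α) ν (k-ν)`,
which is positive for `α < 1`. So twice the sum is a sum of positive terms once `σ` is positive
below `k`, and strong induction on `k` concludes. -/

open Finset

theorem Finset.sum_Ico_one_add_sum_Ico_one_reflect {M : Type*} [AddCommMonoid M]
    (g : ℕ → M) (n : ℕ) :
    ∑ ν ∈ Ico 1 n, g ν + ∑ ν ∈ Ico 1 n, g ν =
      ∑ ν ∈ Ico 1 n, (g ν + g (n - ν)) := by
  rw [sum_add_distrib, sum_Ico_reflect g 1 (by omega : n ≤ n + 1), Nat.add_sub_cancel_left,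
    Nat.add_sub_cancel]

theorem Finset.sum_Ico_one_pos_of_add_reflect_pos {M : Type*} [AddCommMonoid M] [LinearOrder M]
    [IsOrderedCancelAddMonoid M] {g : ℕ → M} {n : ℕ} (hn : 2 ≤ n)
    (hg : ∀ ν ∈ Ico 1 n, 0 < g ν + g (n - ν)) : 0 < ∑ ν ∈ Ico 1 n, g ν := by
  have hpair : 0 < ∑ ν ∈ Ico 1 n, (g ν + g (n - ν)) :=
    sum_pos hg ⟨1, mem_Ico.2 ⟨le_rfl, hn⟩⟩
  rw [← sum_Ico_one_add_sum_Ico_one_reflect] at hpair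
  by_contra! h
  exact (add_nonpos h h).not_gt hpair

theorem weight_add_weight_pos {α x y : ℝ} (hα1 : α < 1) (hx : 0 < x) (hy : 0 < y) :
    0 < ((1 + α) * x - α * (x + y)) * x + ((1 + α) * y - α * (x + y)) * y := by
  have hxy : 0 < x * y := mul_pos hx hy
  calc (0 : ℝ) < (x - y) ^ 2 + 2 * (1 - α) * (x * y) := by positivity
    _ = _ := by ring

theorem stmt_13_general (α : ℝ) (hα1 : α < 1) (σ : ℕ → ℝ)
    (hσ1 : σ 1 = 1)
    (hσ : ∀ k : ℕ, 2 ≤ k → σ k = (1 / ((k : ℝ) * ((k : ℝ) - 1))) *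
      ∑ ν ∈ Finset.Ico 1 k, σ ν * σ (k - ν) * ((1 + α) * ν - α * k) * ν) :
    ∀ k : ℕ, 1 ≤ k → 0 < σ k := by
  intro k
  induction k using Nat.strong_induction_on with
  | _ k ih =>
    intro hk
    obtain rfl | hk2 := eq_or_lt_of_le hk
    · simp [hσ1]
    have hkR : (2 : ℝ) ≤ k := by exact_mod_cast hk2
    rw [hσ k hk2]
    refine mul_pos (one_div_pos.2 (by nlinarith)) (sum_Ico_one_pos_of_add_reflect_pos hk2 ?_)
    intro ν hν
    obtain ⟨hν1, hνk⟩ := mem_Ico.1 hν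
    rw [Nat.sub_sub_self hνk.le, Nat.cast_sub hνk.le]
    have hw := weight_add_weight_pos (x := ν) (y := k - ν) hα1 (by positivity)
      (by rw [sub_pos]; exact_mod_cast hνk)
    rw [add_sub_cancel] at hw
    have hσpair : 0 < σ ν * σ (k - ν) := mul_pos (ih ν hνk hν1) (ih _ (by omega) (by omega))
    calc (0 : ℝ) < σ ν * σ (k - ν) * _ := mul_pos hσpair hw
      _ = _ := by ring

theorem stmt_13 (α : ℝ) (hα : 0 < α) (hα1 : α < 1) (σ : ℕ → ℝ)
    (hσ1 : σ 1 = 1)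
    (hσ : ∀ k : ℕ, 2 ≤ k → σ k = (1 / ((k : ℝ) * ((k : ℝ) - 1))) *
      ∑ ν ∈ Finset.Ico 1 k, σ ν * σ (k - ν) * ((1 + α) * ν - α * k) * ν) :
    ∀ k : ℕ, 1 ≤ k → 0 < σ k :=
  stmt_13_general α hα1 σ hσ1 hσ
end

section
/- If f : [0,∞) → ℝ is completely monotonic (i.e., (-1)^k f^{(k)}(x) ≥ 0 for all k ≥ 0 and x > 0), f(0) = 1, and f is the Laplace transform of a probability measure on [0,∞), then f(x)f(y) ≤ f(x+y) for all x, y ≥ 0. -/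
open MeasureTheory Real

theorem stmt_15 (σ : Measure ℝ) [IsProbabilityMeasure σ]
    (hsupp : σ (Set.Iio 0) = 0) (f : ℝ → ℝ)
    (hf : ∀ x ≥ (0 : ℝ), f x = ∫ t, Real.exp (-x * t) ∂σ)
    (hcm : ∀ k : ℕ, ∀ x > (0 : ℝ), 0 ≤ (-1 : ℝ) ^ k * iteratedDeriv k f x)
    (hf0 : f 0 = 1) :
    ∀ x ≥ (0 : ℝ), ∀ y ≥ (0 : ℝ), f x * f y ≤ f (x + y) := by
  have hae : ∀ᵐ t ∂σ, 0 ≤ t := by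
    rw [ae_iff]
    convert hsupp using 2
    ext t; simp [not_le]
  have hint : ∀ x : ℝ, 0 ≤ x → Integrable (fun t => Real.exp (-x * t)) σ := by
    intro x hx
    refine (integrable_const (1 : ℝ)).mono' ?_ ?_
    · exact (Real.continuous_exp.comp (continuous_const.mul continuous_id)).aestronglyMeasurable
    · filter_upwards [hae] with t ht
      rw [Real.norm_eq_abs, abs_of_pos (Real.exp_pos _)]
      exact Real.exp_le_one_iff.mpr (by nlinarith)
  intro x hx y hy
  set g : ℝ → ℝ := fun t => Real.exp (-x * t) with hg
  set h : ℝ → ℝ := fun t => Real.exp (-y * t) with hh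
  have hgh : ∀ t, g t * h t = Real.exp (-(x + y) * t) := by
    intro t; rw [hg, hh, ← Real.exp_add]; ring_nf
  have hintg := hint x hx
  have hinth := hint y hy
  have hintgh : Integrable (fun t => g t * h t) σ := by
    simp only [hgh]; exact hint (x + y) (by linarith)
  -- integrability on the product
  have h11 : Integrable (fun p : ℝ × ℝ => g p.1 * h p.1) (σ.prod σ) := by
    have := hintgh.mul_prod (integrable_const (1 : ℝ) (μ := σ))
    exact this.congr (Filter.Eventually.of_forall fun p => by simp)
  have h22 : Integrable (fun p : ℝ × ℝ => g p.2 * h p.2) (σ.prod σ) := by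
    have := (integrable_const (1 : ℝ) (μ := σ)).mul_prod hintgh
    exact this.congr (Filter.Eventually.of_forall fun p => by simp)
  have h12 : Integrable (fun p : ℝ × ℝ => g p.1 * h p.2) (σ.prod σ) :=
    hintg.mul_prod hinth
  have h21 : Integrable (fun p : ℝ × ℝ => g p.2 * h p.1) (σ.prod σ) := by
    have := hinth.mul_prod hintg
    exact this.congr (Filter.Eventually.of_forall fun p => mul_comm _ _)
  -- pointwise nonnegativity
  have hpos : ∀ p : ℝ × ℝ, 0 ≤ (g p.1 - g p.2) * (h p.1 - h p.2) := by
    intro ⟨s, t⟩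
    have hgmono : ∀ a b : ℝ, a ≤ b → g b ≤ g a := fun a b hab =>
      Real.exp_le_exp.mpr (by nlinarith)
    have hhmono : ∀ a b : ℝ, a ≤ b → h b ≤ h a := fun a b hab =>
      Real.exp_le_exp.mpr (by nlinarith)
    rcases le_total s t with hst | hst
    · have h1 := hgmono s t hst; have h2 := hhmono s t hst; nlinarith
    · have h1 := hgmono t s hst; have h2 := hhmono t s hst; nlinarith
  have hI : 0 ≤ ∫ p : ℝ × ℝ, (g p.1 - g p.2) * (h p.1 - h p.2) ∂(σ.prod σ) :=
    integral_nonneg fun p => hpos p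
  have expand : ∫ p : ℝ × ℝ, (g p.1 - g p.2) * (h p.1 - h p.2) ∂(σ.prod σ)
      = (∫ p : ℝ × ℝ, g p.1 * h p.1 ∂(σ.prod σ))
        - (∫ p : ℝ × ℝ, g p.1 * h p.2 ∂(σ.prod σ))
        - (∫ p : ℝ × ℝ, g p.2 * h p.1 ∂(σ.prod σ))
        + (∫ p : ℝ × ℝ, g p.2 * h p.2 ∂(σ.prod σ)) := by
    calc ∫ p : ℝ × ℝ, (g p.1 - g p.2) * (h p.1 - h p.2) ∂(σ.prod σ)
        = ∫ p : ℝ × ℝ, (g p.1 * h p.1 - g p.1 * h p.2 - g p.2 * h p.1) + g p.2 * h p.2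
            ∂(σ.prod σ) := by congr 1; funext p; ring
      _ = (∫ p : ℝ × ℝ, g p.1 * h p.1 - g p.1 * h p.2 - g p.2 * h p.1 ∂(σ.prod σ))
            + ∫ p : ℝ × ℝ, g p.2 * h p.2 ∂(σ.prod σ) :=
        integral_add ((h11.sub h12).sub h21) h22
      _ = ((∫ p : ℝ × ℝ, g p.1 * h p.1 - g p.1 * h p.2 ∂(σ.prod σ))
            - ∫ p : ℝ × ℝ, g p.2 * h p.1 ∂(σ.prod σ))
            + ∫ p : ℝ × ℝ, g p.2 * h p.2 ∂(σ.prod σ) := by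
        rw [integral_sub (f := fun p : ℝ × ℝ => g p.1 * h p.1 - g p.1 * h p.2) (h11.sub h12) h21]
      _ = _ := by rw [integral_sub (f := fun p : ℝ × ℝ => g p.1 * h p.1) h11 h12]
  have e11 : ∫ p : ℝ × ℝ, g p.1 * h p.1 ∂(σ.prod σ) = ∫ t, g t * h t ∂σ := by
    have := MeasureTheory.integral_prod_mul (μ := σ) (ν := σ) (fun t => g t * h t)
      (fun _ => (1 : ℝ))
    simpa using this
  have e22 : ∫ p : ℝ × ℝ, g p.2 * h p.2 ∂(σ.prod σ) = ∫ t, g t * h t ∂σ := by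
    have := MeasureTheory.integral_prod_mul (μ := σ) (ν := σ) (fun _ => (1 : ℝ))
      (fun t => g t * h t)
    simpa using this
  have e12 : ∫ p : ℝ × ℝ, g p.1 * h p.2 ∂(σ.prod σ) = (∫ t, g t ∂σ) * ∫ t, h t ∂σ :=
    MeasureTheory.integral_prod_mul (μ := σ) (ν := σ) g h
  have e21 : ∫ p : ℝ × ℝ, g p.2 * h p.1 ∂(σ.prod σ) = (∫ t, g t ∂σ) * ∫ t, h t ∂σ := by
    calc ∫ p : ℝ × ℝ, g p.2 * h p.1 ∂(σ.prod σ)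
        = ∫ p : ℝ × ℝ, h p.1 * g p.2 ∂(σ.prod σ) := by congr 1; funext p; ring
      _ = (∫ t, h t ∂σ) * ∫ t, g t ∂σ := MeasureTheory.integral_prod_mul (μ := σ) (ν := σ) h g
      _ = _ := mul_comm _ _
  rw [expand, e11, e22, e12, e21] at hI
  have key : (∫ t, g t ∂σ) * ∫ t, h t ∂σ ≤ ∫ t, g t * h t ∂σ := by linarith
  rw [hf x hx, hf y hy, hf (x + y) (by linarith)]
  calc (∫ t, Real.exp (-x * t) ∂σ) * ∫ t, Real.exp (-y * t) ∂σ
      ≤ ∫ t, g t * h t ∂σ := key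
    _ = ∫ t, Real.exp (-(x + y) * t) ∂σ := by simp only [hgh]
end
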